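/- arXiv:2005.10571 — 3 statements merged into one kernel-verified Lean document; each statement's English description precedes it below -/
import Mathlib

section
/- For a d-dimensional vector of independent Rademacher variables W, setting R = W/√d, for every x ∈ ℝᵈ we have P((Rᵀx)² ≥ ‖x‖₂²/(2d)) ≥ 1/28. -/
/-!
Write `S = ∑ i, Wᵢ xᵢ`, so that `(Rᵀx)² = S² / d`. For independent centred `Y` and `T`, every odd
term in the binomial expansion of `𝔼 (Y + T)ⁿ` vanishes, leaving `𝔼 (Y + T)² = 𝔼 Y² + 𝔼 T²` and
`𝔼 (Y + T)⁴ = 𝔼 Y⁴ + 6 𝔼 Y² 𝔼 T² + 𝔼 T⁴`; hence the bound `𝔼 T⁴ ≤ 3 (𝔼 T²)²`, which holds with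
room to spare for each `Wᵢ xᵢ`, survives adding one coordinate at a time, and `𝔼 S⁴ ≤ 3 ‖x‖⁴`
while `𝔼 S² = ‖x‖²`. The Paley–Zygmund inequality for `Z = S²` at level `1/2` then bounds
`P(S² ≥ ‖x‖² / 2)` below by `(1/4) (𝔼 Z)² / 𝔼 Z² ≥ 1/12`.
-/

open MeasureTheory ProbabilityTheory

section PaleyZygmund
variable {Ω : Type*} {mΩ : MeasurableSpace Ω} {μ : Measure Ω}

theorem sq_integral_mul_le_integral_sq_mul_integral_sq {f g : Ω → ℝ}
    (hf : MemLp f 2 μ) (hg : MemLp g 2 μ) :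
    (∫ ω, f ω * g ω ∂μ) ^ 2 ≤ (∫ ω, f ω ^ 2 ∂μ) * ∫ ω, g ω ^ 2 ∂μ := by
  have holder := integral_mul_norm_le_Lp_mul_Lq .two_two (by simpa using hf) (by simpa using hg)
  simp only [Real.norm_eq_abs, Real.rpow_two, sq_abs, ← Real.sqrt_eq_rpow] at holder
  have habs : |∫ ω, f ω * g ω ∂μ| ≤ ∫ ω, |f ω| * |g ω| ∂μ := by
    simpa only [abs_mul] using abs_integral_le_integral_abs (f := fun ω => f ω * g ω)
  calc (∫ ω, f ω * g ω ∂μ) ^ 2 = |∫ ω, f ω * g ω ∂μ| ^ 2 := (sq_abs _).symm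
    _ ≤ (√(∫ ω, f ω ^ 2 ∂μ) * √(∫ ω, g ω ^ 2 ∂μ)) ^ 2 := by gcongr; exact habs.trans holder
    _ = (∫ ω, f ω ^ 2 ∂μ) * ∫ ω, g ω ^ 2 ∂μ := by
      rw [mul_pow, Real.sq_sqrt (integral_nonneg fun _ => sq_nonneg _),
        Real.sq_sqrt (integral_nonneg fun _ => sq_nonneg _)]

theorem paley_zygmund [IsProbabilityMeasure μ] {Z : Ω → ℝ} (hZ_nonneg : 0 ≤ᵐ[μ] Z)
    (hZ : MemLp Z 2 μ) {θ : ℝ} (hθ₀ : 0 ≤ θ) (hθ₁ : θ ≤ 1) :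
    (1 - θ) ^ 2 * (∫ ω, Z ω ∂μ) ^ 2
      ≤ (∫ ω, Z ω ^ 2 ∂μ) * μ.real {ω | θ * ∫ ω, Z ω ∂μ ≤ Z ω} := by
  set m := ∫ ω, Z ω ∂μ
  set A := {ω | θ * m ≤ Z ω}
  have hZi : Integrable Z μ := hZ.integrable one_le_two
  have hA : NullMeasurableSet A μ := nullMeasurableSet_le aemeasurable_const hZ.1.aemeasurable
  have hm : 0 ≤ m := integral_nonneg_of_ae hZ_nonneg
  have hlower : (1 - θ) * m ≤ ∫ ω, A.indicator Z ω ∂μ := by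
    have hoff ω : Z ω - A.indicator Z ω ≤ θ * m := by
      by_cases hω : ω ∈ A
      · simpa [Set.indicator_of_mem hω] using mul_nonneg hθ₀ hm
      · simpa [Set.indicator_of_notMem hω] using (not_le.mp hω).le
    have h : ∫ ω, (Z ω - A.indicator Z ω) ∂μ ≤ ∫ _, θ * m ∂μ :=
      integral_mono (hZi.sub (hZi.indicator₀ hA)) (integrable_const (θ * m)) hoff
    rw [integral_sub hZi (hZi.indicator₀ hA), integral_const, probReal_univ, one_smul] at h
    linarith
  have h1A : MemLp (A.indicator (1 : Ω → ℝ)) 2 μ :=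
    .of_bound (aestronglyMeasurable_const.indicator₀ hA) 1 <| .of_forall fun ω => by
      by_cases hω : ω ∈ A <;> simp [hω]
  have hupper : (∫ ω, A.indicator Z ω ∂μ) ^ 2 ≤ (∫ ω, Z ω ^ 2 ∂μ) * μ.real A := by
    have hZA ω : A.indicator Z ω = Z ω * A.indicator 1 ω := by by_cases hω : ω ∈ A <;> simp [hω]
    have h1A_sq ω : A.indicator (1 : Ω → ℝ) ω ^ 2 = A.indicator 1 ω := by
      by_cases hω : ω ∈ A <;> simp [hω]
    calc (∫ ω, A.indicator Z ω ∂μ) ^ 2 = (∫ ω, Z ω * A.indicator 1 ω ∂μ) ^ 2 := by simp only [hZA]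
      _ ≤ (∫ ω, Z ω ^ 2 ∂μ) * ∫ ω, A.indicator (1 : Ω → ℝ) ω ^ 2 ∂μ :=
        sq_integral_mul_le_integral_sq_mul_integral_sq hZ h1A
      _ = (∫ ω, Z ω ^ 2 ∂μ) * μ.real A := by
        simp only [h1A_sq, integral_indicator₀ hA, Pi.one_apply, setIntegral_const, smul_eq_mul,
          mul_one]
  calc (1 - θ) ^ 2 * m ^ 2 = ((1 - θ) * m) ^ 2 := by ring
    _ ≤ (∫ ω, A.indicator Z ω ∂μ) ^ 2 := by gcongr
    _ ≤ _ := hupper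

end PaleyZygmund

section Moments
variable {Ω : Type*} {mΩ : MeasurableSpace Ω} {μ : Measure Ω}

theorem MeasureTheory.MemLp.integrable_pow_of_le [IsFiniteMeasure μ] {X : Ω → ℝ} {n k : ℕ}
    (hX : MemLp X n μ) (hk : k ≤ n) : Integrable (fun ω => X ω ^ k) μ :=
  (integrable_norm_iff (hX.1.pow k)).mp <| by
    simpa only [Pi.pow_apply, norm_pow] using
      (hX.mono_exponent (by exact_mod_cast hk)).integrable_norm_pow'

theorem MeasureTheory.MemLp.sq [IsFiniteMeasure μ] {X : Ω → ℝ} (hX : MemLp X 4 μ) :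
    MemLp (fun ω => X ω ^ 2) 2 μ :=
  (memLp_two_iff_integrable_sq (f := fun ω => X ω ^ 2) (hX.1.pow 2)).mpr <| by
    simpa only [← pow_mul] using hX.integrable_pow_of_le (k := 4) le_rfl

theorem ProbabilityTheory.IndepFun.integral_add_pow [IsFiniteMeasure μ] {X Y : Ω → ℝ}
    (hXY : IndepFun X Y μ) {n : ℕ} (hX : MemLp X n μ) (hY : MemLp Y n μ) :
    ∫ ω, (X ω + Y ω) ^ n ∂μ
      = ∑ m ∈ Finset.range (n + 1),
          (∫ ω, X ω ^ m ∂μ) * (∫ ω, Y ω ^ (n - m) ∂μ) * n.choose m := by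
  have hpow (k l : ℕ) : IndepFun (fun ω => X ω ^ k) (fun ω => Y ω ^ l) μ :=
    hXY.comp (measurable_id.pow_const k) (measurable_id.pow_const l)
  have hint (m : ℕ) (hm : m ∈ Finset.range (n + 1)) :
      Integrable (fun ω => X ω ^ m * Y ω ^ (n - m) * n.choose m) μ :=
    ((hpow m (n - m)).integrable_mul (hX.integrable_pow_of_le (Finset.mem_range_succ_iff.mp hm))
      (hY.integrable_pow_of_le (n.sub_le m))).mul_const _
  simp_rw [add_pow]
  rw [integral_finsetSum _ hint]
  refine Finset.sum_congr rfl fun m _ => ?_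
  rw [integral_mul_const]
  exact congrArg (· * _) ((hpow m (n - m)).integral_mul_eq_mul_integral (hX.1.pow m) (hY.1.pow _))

variable [IsProbabilityMeasure μ]

theorem ProbabilityTheory.IndepFun.integral_add_sq {X Y : Ω → ℝ} (hXY : IndepFun X Y μ)
    (hX : MemLp X 2 μ) (hY : MemLp Y 2 μ) (hX₀ : ∫ ω, X ω ∂μ = 0) :
    ∫ ω, (X ω + Y ω) ^ 2 ∂μ = ∫ ω, X ω ^ 2 ∂μ + ∫ ω, Y ω ^ 2 ∂μ := by
  rw [hXY.integral_add_pow hX hY]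
  simp [Finset.sum_range_succ, hX₀]
  ring

theorem ProbabilityTheory.IndepFun.integral_add_pow_four {X Y : Ω → ℝ} (hXY : IndepFun X Y μ)
    (hX : MemLp X 4 μ) (hY : MemLp Y 4 μ) (hX₀ : ∫ ω, X ω ∂μ = 0) (hY₀ : ∫ ω, Y ω ∂μ = 0) :
    ∫ ω, (X ω + Y ω) ^ 4 ∂μ
      = ∫ ω, X ω ^ 4 ∂μ + 6 * (∫ ω, X ω ^ 2 ∂μ) * (∫ ω, Y ω ^ 2 ∂μ) + ∫ ω, Y ω ^ 4 ∂μ := by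
  rw [hXY.integral_add_pow hX hY]
  simp [Finset.sum_range_succ, hX₀, hY₀, Nat.choose]
  ring

end Moments

namespace ProbabilityTheory.iIndepFun
variable {Ω ι : Type*} {mΩ : MeasurableSpace Ω} {μ : Measure Ω} {Y : ι → Ω → ℝ}

theorem mul_const (hY : iIndepFun Y μ) (c : ι → ℝ) : iIndepFun (fun i ω => Y i ω * c i) μ :=
  hY.comp (fun i y => y * c i) fun i => measurable_mul_const (c i)

theorem indepFun_finsetSum_apply (hY : iIndepFun Y μ) (hY_meas : ∀ i, AEMeasurable (Y i) μ)
    {s : Finset ι} {a : ι} (ha : a ∉ s) : IndepFun (Y a) (fun ω => ∑ i ∈ s, Y i ω) μ := by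
  simpa only [Finset.sum_fn] using (hY.indepFun_finsetSum_of_notMem₀ hY_meas ha).symm

variable [IsProbabilityMeasure μ]

theorem integral_sum_sq (hY : iIndepFun Y μ) (hY₂ : ∀ i, MemLp (Y i) 2 μ)
    (hY₀ : ∀ i, ∫ ω, Y i ω ∂μ = 0) (s : Finset ι) :
    ∫ ω, (∑ i ∈ s, Y i ω) ^ 2 ∂μ = ∑ i ∈ s, ∫ ω, Y i ω ^ 2 ∂μ := by
  induction s using Finset.cons_induction with
  | empty => simp
  | cons a s ha ih =>
    simp only [Finset.sum_cons]
    rw [(hY.indepFun_finsetSum_apply (fun i => (hY₂ i).1.aemeasurable) ha).integral_add_sq (hY₂ a)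
      (memLp_finsetSum s fun i _ => hY₂ i) (hY₀ a), ih]

theorem integral_sum_pow_four_le (hY : iIndepFun Y μ) (hY₄ : ∀ i, MemLp (Y i) 4 μ)
    (hY₀ : ∀ i, ∫ ω, Y i ω ∂μ = 0)
    (hY_kurtosis : ∀ i, ∫ ω, Y i ω ^ 4 ∂μ ≤ 3 * (∫ ω, Y i ω ^ 2 ∂μ) ^ 2) (s : Finset ι) :
    ∫ ω, (∑ i ∈ s, Y i ω) ^ 4 ∂μ ≤ 3 * (∑ i ∈ s, ∫ ω, Y i ω ^ 2 ∂μ) ^ 2 := by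
  have hY₂ i : MemLp (Y i) 2 μ := (hY₄ i).mono_exponent (by norm_num)
  induction s using Finset.cons_induction with
  | empty => simp
  | cons a s ha ih =>
    have hS₀ : ∫ ω, ∑ i ∈ s, Y i ω ∂μ = 0 := by
      rw [integral_finsetSum s fun i _ => (hY₂ i).integrable one_le_two]
      exact Finset.sum_eq_zero fun i _ => hY₀ i
    simp only [Finset.sum_cons]
    rw [(hY.indepFun_finsetSum_apply (fun i => (hY₄ i).1.aemeasurable) ha).integral_add_pow_four
      (hY₄ a) (memLp_finsetSum s fun i _ => hY₄ i) (hY₀ a) hS₀, hY.integral_sum_sq hY₂ hY₀ s]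
    linear_combination hY_kurtosis a + ih

end ProbabilityTheory.iIndepFun

section Rademacher

noncomputable def rademacher : Measure ℝ :=
  (2⁻¹ : ENNReal) • Measure.dirac 1 + (2⁻¹ : ENNReal) • Measure.dirac (-1)

instance : IsProbabilityMeasure rademacher :=
  ⟨by simp [rademacher, ENNReal.inv_two_add_inv_two]⟩

theorem integral_rademacher (f : ℝ → ℝ) : ∫ y, f y ∂rademacher = (f 1 + f (-1)) / 2 := by
  rw [rademacher, integral_add_measure, integral_smul_measure, integral_smul_measure,
    integral_dirac, integral_dirac]
  · simp [ENNReal.toReal_inv]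
    ring
  all_goals exact (integrable_dirac (by simp)).smul_measure (by simp)

theorem ae_abs_le_one_rademacher : ∀ᵐ y ∂rademacher, |y| ≤ 1 := by
  simp [rademacher]

variable {Ω : Type*} {mΩ : MeasurableSpace Ω} {μ : Measure Ω} {X : Ω → ℝ}

theorem aemeasurable_of_map_eq_rademacher (hX : μ.map X = rademacher) : AEMeasurable X μ :=
  .of_map_ne_zero <| hX ▸ IsProbabilityMeasure.ne_zero _

theorem memLp_of_map_eq_rademacher [IsFiniteMeasure μ] (hX : μ.map X = rademacher)
    (p : ENNReal) : MemLp X p μ :=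
  .of_bound (aemeasurable_of_map_eq_rademacher hX).aestronglyMeasurable 1 <| by
    simpa using ae_of_ae_map (aemeasurable_of_map_eq_rademacher hX)
      (hX ▸ ae_abs_le_one_rademacher)

theorem integral_mul_const_pow_of_map_eq_rademacher (hX : μ.map X = rademacher) (c : ℝ)
    (n : ℕ) : ∫ ω, (X ω * c) ^ n ∂μ = c ^ n * (1 + (-1) ^ n) / 2 := by
  rw [← integral_map (f := fun y => (y * c) ^ n) (aemeasurable_of_map_eq_rademacher hX)
    (by fun_prop), hX, integral_rademacher]
  ring

end Rademacher

section RademacherSum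
variable {Ω ι : Type*} {mΩ : MeasurableSpace Ω} {μ : Measure Ω} [IsProbabilityMeasure μ]
  [Fintype ι] {W : Ω → ι → ℝ}

variable (hW : ∀ i, μ.map (fun ω => W ω i) = rademacher)
  (hW_indep : iIndepFun (fun i ω => W ω i) μ) (x : ι → ℝ)
include hW hW_indep

theorem integral_rademacher_sum_sq : ∫ ω, (∑ i, W ω i * x i) ^ 2 ∂μ = ∑ i, x i ^ 2 := by
  have hmoment i := integral_mul_const_pow_of_map_eq_rademacher (hW i) (x i)
  rw [(hW_indep.mul_const x).integral_sum_sq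
    (fun i => (memLp_of_map_eq_rademacher (hW i) 2).mul_const (x i))
    (fun i => by simpa using hmoment i 1)]
  norm_num [hmoment]

theorem integral_rademacher_sum_pow_four_le :
    ∫ ω, (∑ i, W ω i * x i) ^ 4 ∂μ ≤ 3 * (∑ i, x i ^ 2) ^ 2 := by
  have hmoment i := integral_mul_const_pow_of_map_eq_rademacher (hW i) (x i)
  convert (hW_indep.mul_const x).integral_sum_pow_four_le
    (fun i => (memLp_of_map_eq_rademacher (hW i) 4).mul_const (x i))
    (fun i => by simpa using hmoment i 1)
    (fun i => by norm_num [hmoment]; nlinarith [sq_nonneg (x i ^ 2)]) Finset.univ using 3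
  norm_num [hmoment]

theorem one_div_twelve_le_measureReal_rademacher_sum_sq :
    1 / 12 ≤ μ.real {ω | (∑ i, x i ^ 2) / 2 ≤ (∑ i, W ω i * x i) ^ 2} := by
  set σ2 := ∑ i, x i ^ 2
  set S : Ω → ℝ := fun ω => ∑ i, W ω i * x i
  have hS : MemLp S 4 μ :=
    memLp_finsetSum _ fun i _ => (memLp_of_map_eq_rademacher (hW i) 4).mul_const (x i)
  have hPZ := paley_zygmund (.of_forall fun ω => sq_nonneg (S ω)) hS.sq
    (by norm_num : (0 : ℝ) ≤ 1 / 2) (by norm_num)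
  have hS₂ : ∫ ω, S ω ^ 2 ∂μ = σ2 := integral_rademacher_sum_sq hW hW_indep x
  have hS₄ : ∫ ω, (S ω ^ 2) ^ 2 ∂μ ≤ 3 * σ2 ^ 2 := by
    simpa only [← pow_mul] using integral_rademacher_sum_pow_four_le hW hW_indep x
  rw [hS₂, one_div_mul_eq_div] at hPZ
  rcases (show 0 ≤ σ2 from Finset.sum_nonneg fun i _ => sq_nonneg (x i)).eq_or_lt with hσ | hσ
  · simp only [← hσ, zero_div, sq_nonneg, Set.ofPred_true, probReal_univ]
    norm_num
  · nlinarith [pow_pos hσ 2, measureReal_nonneg (μ := μ) (s := {ω | σ2 / 2 ≤ S ω ^ 2})]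

end RademacherSum

theorem rademacher_paley_zygmund_general
    {Ω : Type*} [MeasurableSpace Ω] (μ : Measure Ω) [IsProbabilityMeasure μ]
    {d : ℕ} (W : Ω → Fin d → ℝ)
    (hWdist : ∀ i, Measure.map (fun ω => W ω i) μ
      = (2⁻¹ : ENNReal) • Measure.dirac (1 : ℝ) + (2⁻¹ : ENNReal) • Measure.dirac (-1 : ℝ))
    (hWindep : iIndepFun (fun i ω => W ω i) μ)
    (x : Fin d → ℝ) :
    (1 / 28 : ENNReal)
      ≤ μ {ω | (∑ i, (x i) ^ 2) / (2 * d)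
          ≤ ((1 / Real.sqrt d) * ∑ i, W ω i * x i) ^ 2} := by
  have hsub : {ω | (∑ i, x i ^ 2) / 2 ≤ (∑ i, W ω i * x i) ^ 2}
      ⊆ {ω | (∑ i, x i ^ 2) / (2 * d) ≤ ((1 / Real.sqrt d) * ∑ i, W ω i * x i) ^ 2} := by
    intro ω (hω : (∑ i, x i ^ 2) / 2 ≤ (∑ i, W ω i * x i) ^ 2)
    have hscale : ((1 / Real.sqrt d) * ∑ i, W ω i * x i) ^ 2 = (∑ i, W ω i * x i) ^ 2 / d := by
      rw [mul_pow, div_pow, one_pow, Real.sq_sqrt d.cast_nonneg, one_div_mul_eq_div]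
    calc (∑ i, x i ^ 2) / (2 * d) = (∑ i, x i ^ 2) / 2 / d := by rw [div_div]
      _ ≤ _ := hscale ▸ div_le_div_of_nonneg_right hω d.cast_nonneg
  calc (1 / 28 : ENNReal) ≤ ENNReal.ofReal (1 / 12) := by
        rw [ENNReal.ofReal_div_of_pos (by norm_num)]
        simpa using ENNReal.div_le_div_left (by norm_num) 1
    _ ≤ ENNReal.ofReal (μ.real {ω | (∑ i, x i ^ 2) / 2 ≤ (∑ i, W ω i * x i) ^ 2}) :=
      ENNReal.ofReal_le_ofReal (one_div_twelve_le_measureReal_rademacher_sum_sq hWdist hWindep x)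
    _ ≤ _ := by rw [ofReal_measureReal]; exact measure_mono hsub

/-- For a `d`-dimensional vector `W` of independent Rademacher variables, with `R = W/√d`,
for every `x ∈ ℝᵈ` we have `P((Rᵀx)² ≥ ‖x‖₂²/(2d)) ≥ 1/28`. -/
theorem rademacher_paley_zygmund
    {Ω : Type*} [MeasurableSpace Ω] (μ : Measure Ω) [IsProbabilityMeasure μ]
    {d : ℕ} (hd : 1 ≤ d) (W : Ω → Fin d → ℝ)
    (hWmeas : ∀ i, Measurable fun ω => W ω i)
    (hWdist : ∀ i, Measure.map (fun ω => W ω i) μ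
      = (2⁻¹ : ENNReal) • Measure.dirac (1 : ℝ) + (2⁻¹ : ENNReal) • Measure.dirac (-1 : ℝ))
    (hWindep : iIndepFun (fun i ω => W ω i) μ)
    (x : Fin d → ℝ) :
    (1 / 28 : ENNReal)
      ≤ μ {ω | (∑ i, (x i) ^ 2) / (2 * d)
          ≤ ((1 / Real.sqrt d) * ∑ i, W ω i * x i) ^ 2} :=
  rademacher_paley_zygmund_general μ W hWdist hWindep x
end

section
/- Suppose a distributed test has acceptance structure: sets A₁,…,A_L partitioning 𝒳ⁿ and sets B₁,…,B_L ⊆ 𝒴ⁿ such that ∑ᵢ P_{XY}(Aᵢ × Bᵢ) ≥ 1-δ and ∑ᵢ P_X(Aᵢ)·P_Y(Bᵢ) ≤ ε, where (X,Y) (n-fold product) satisfies the hypercontractive rectangle bound P_{XY}(A×B) ≤ P_X(A)^{1/p'} P_Y(B)^{1/q} for all measurable A, B, with 1 ≤ p' ≤ q ≤ p and p' = p/(p-1). Then 1-δ ≤ ε^{1/q}·L^{1/p}. -/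
/-!
By the rectangle bound, `1 - δ ≤ ∑ᵢ aᵢ ^ (1 - 1/p) * bᵢ ^ (1/q)` with `aᵢ = P_X(Aᵢ)` and
`bᵢ = P_Y(Bᵢ)`. Write each term as `(aᵢ bᵢ) ^ (1/q) * aᵢ ^ (1 - 1/p - 1/q)`; the exponent is
nonnegative exactly because `p' ≤ q`. Hölder with `q` and `q' = q/(q-1)` bounds the sum by
`(∑ aᵢ bᵢ) ^ (1/q) * (∑ aᵢ ^ θ) ^ (1/q')` with `θ = 1 - q'/p ∈ [0, 1]`, and Hölder against the
constant `1` gives `∑ aᵢ ^ θ ≤ L ^ (1 - θ) * (∑ aᵢ) ^ θ`. Since the `Aᵢ` partition the space,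
`∑ aᵢ = 1`, and `(1 - θ) / q' = 1/p`.
-/

open MeasureTheory Finset

namespace Real

theorem one_lt_of_one_le_div_sub_one {p : ℝ} (h : 1 ≤ p / (p - 1)) : 1 < p := by
  by_contra! hp
  rcases hp.eq_or_lt with rfl | hp
  · norm_num at h
  · rw [le_div_iff_of_neg (by linarith), one_mul] at h
    linarith

theorem one_div_add_one_div_le_one_of_conjExponent_le {p q : ℝ} (hp : 1 < p)
    (hq : p / (p - 1) ≤ q) : 1 / p + 1 / q ≤ 1 := by
  have hconj : p.HolderConjugate (p / (p - 1)) := .conjExponent hp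
  calc 1 / p + 1 / q ≤ 1 / p + 1 / (p / (p - 1)) := by gcongr
    _ = 1 := by simpa only [one_div] using hconj.inv_add_inv_eq_one

variable {ι : Type*} (s : Finset ι) {a b : ι → ℝ}

theorem sum_rpow_le_card_rpow_mul_sum_rpow (ha : ∀ i, 0 ≤ a i) {θ : ℝ} (hθ₀ : 0 ≤ θ)
    (hθ₁ : θ ≤ 1) : ∑ i ∈ s, a i ^ θ ≤ (#s : ℝ) ^ (1 - θ) * (∑ i ∈ s, a i) ^ θ := by
  rcases hθ₀.eq_or_lt with rfl | hθ
  · simp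
  have key := inner_le_weight_mul_Lp_of_nonneg s ((one_le_inv₀ hθ).mpr hθ₁) (fun _ ↦ 1)
    (fun i ↦ a i ^ θ) (fun _ ↦ zero_le_one) (fun i ↦ rpow_nonneg (ha i) θ)
  have hcancel : ∀ i, (a i ^ θ) ^ θ⁻¹ = a i := fun i ↦ rpow_rpow_inv (ha i) hθ.ne'
  simpa only [one_mul, inv_inv, hcancel, sum_const, nsmul_eq_mul, mul_one] using key

theorem sum_rpow_mul_rpow_le (ha : ∀ i, 0 ≤ a i) (hb : ∀ i, 0 ≤ b i) {α β : ℝ} (hα : 0 ≤ α)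
    (hβ₀ : 0 < β) (hβ₁ : β < 1) (hαβ : α + β ≤ 1) :
    ∑ i ∈ s, a i ^ (1 - α) * b i ^ β ≤
      (∑ i ∈ s, a i * b i) ^ β * (∑ i ∈ s, a i) ^ (1 - α - β) * (#s : ℝ) ^ α := by
  set θ := (1 - α - β) / (1 - β)
  have hβ' : 0 < 1 - β := sub_pos.mpr hβ₁
  have hθ₀ : 0 ≤ θ := div_nonneg (by linarith) hβ'.le
  have hθ₁ : θ ≤ 1 := (div_le_one hβ').mpr (by linarith)
  have hsplit : ∀ i, a i ^ (1 - α) * b i ^ β = (a i * b i) ^ β * a i ^ (1 - α - β) := fun i ↦ by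
    rw [mul_rpow (ha i) (hb i), mul_right_comm, ← rpow_add' (ha i) (by linarith)]
    ring_nf
  have holder := inner_le_Lp_mul_Lq_of_nonneg s (HolderConjugate.inv_one_sub_inv hβ₀ hβ₁)
    (f := fun i ↦ (a i * b i) ^ β) (g := fun i ↦ a i ^ (1 - α - β))
    (fun i _ ↦ rpow_nonneg (mul_nonneg (ha i) (hb i)) _) (fun i _ ↦ rpow_nonneg (ha i) _)
  have hf : ∀ i, ((a i * b i) ^ β) ^ β⁻¹ = a i * b i :=
    fun i ↦ rpow_rpow_inv (mul_nonneg (ha i) (hb i)) hβ₀.ne'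
  have hg : ∀ i, (a i ^ (1 - α - β)) ^ (1 - β)⁻¹ = a i ^ θ :=
    fun i ↦ by rw [← rpow_mul (ha i), ← div_eq_mul_inv]
  simp only [hf, hg, one_div, inv_inv, ← hsplit] at holder
  have hsum_a : 0 ≤ ∑ i ∈ s, a i := sum_nonneg fun i _ ↦ ha i
  calc ∑ i ∈ s, a i ^ (1 - α) * b i ^ β
      ≤ (∑ i ∈ s, a i * b i) ^ β * (∑ i ∈ s, a i ^ θ) ^ (1 - β) := holder
    _ ≤ (∑ i ∈ s, a i * b i) ^ β * ((#s : ℝ) ^ (1 - θ) * (∑ i ∈ s, a i) ^ θ) ^ (1 - β) := by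
      have : 0 ≤ ∑ i ∈ s, a i ^ θ := sum_nonneg fun i _ ↦ rpow_nonneg (ha i) θ
      have : 0 ≤ ∑ i ∈ s, a i * b i := sum_nonneg fun i _ ↦ mul_nonneg (ha i) (hb i)
      gcongr
      exact sum_rpow_le_card_rpow_mul_sum_rpow s ha hθ₀ hθ₁
    _ = (∑ i ∈ s, a i * b i) ^ β * (∑ i ∈ s, a i) ^ (1 - α - β) * (#s : ℝ) ^ α := by
      rw [mul_rpow (by positivity) (by positivity), ← rpow_mul (by positivity),
        ← rpow_mul hsum_a]
      have h2 : θ * (1 - β) = 1 - α - β := div_mul_cancel₀ _ hβ'.ne'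
      have h1 : (1 - θ) * (1 - β) = α := by rw [sub_mul, h2]; ring
      rw [h1, h2]; ring

end Real

theorem MeasureTheory.sum_measureReal_eq_one_of_existsUnique_mem {α ι : Type*}
    [MeasurableSpace α] [Fintype ι] (μ : Measure α) [IsProbabilityMeasure μ] {A : ι → Set α}
    (hA : ∀ i, MeasurableSet (A i)) (hpart : ∀ x, ∃! i, x ∈ A i) : ∑ i, μ.real (A i) = 1 := by
  have hdisj : Pairwise (Function.onFun Disjoint A) := fun i j hij ↦
    Set.disjoint_left.mpr fun x hxi hxj ↦ hij ((hpart x).unique hxi hxj)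
  have hcover : ⋃ i, A i = Set.univ :=
    Set.iUnion_eq_univ_iff.mpr fun x ↦ (hpart x).exists
  rw [← measureReal_iUnion_fintype hdisj hA, hcover, probReal_univ]

theorem hypercontractivity_lower_bound_general
    {𝒳 𝒴 : Type*} [MeasurableSpace 𝒳] [MeasurableSpace 𝒴]
    (μXY : Measure (𝒳 × 𝒴))
    (μX : Measure 𝒳) [IsProbabilityMeasure μX]
    (μY : Measure 𝒴)
    (p q : ℝ) (hp'1 : 1 ≤ p / (p - 1)) (hp'q : p / (p - 1) ≤ q)
    (hrect : ∀ (A : Set 𝒳) (B : Set 𝒴), MeasurableSet A → MeasurableSet B →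
        (μXY (A ×ˢ B)).toReal ≤ (μX A).toReal ^ (1 - 1 / p) * (μY B).toReal ^ (1 / q))
    (L : ℕ) (A : Fin L → Set 𝒳) (B : Fin L → Set 𝒴)
    (hA : ∀ i, MeasurableSet (A i)) (hB : ∀ i, MeasurableSet (B i))
    (hpart : ∀ x : 𝒳, ∃! i, x ∈ A i)
    (δ ε : ℝ)
    (h1 : 1 - δ ≤ ∑ i, (μXY ((A i) ×ˢ (B i))).toReal)
    (h2 : ∑ i, (μX (A i)).toReal * (μY (B i)).toReal ≤ ε) :
    1 - δ ≤ ε ^ (1 / q) * (L : ℝ) ^ (1 / p) := by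
  have hp : 1 < p := Real.one_lt_of_one_le_div_sub_one hp'1
  have hq : 0 < q := (div_pos (by linarith) (by linarith)).trans_le hp'q
  have hpq : 1 / p + 1 / q ≤ 1 := Real.one_div_add_one_div_le_one_of_conjExponent_le hp hp'q
  have hsum : ∑ i, (μX (A i)).toReal = 1 := sum_measureReal_eq_one_of_existsUnique_mem μX hA hpart
  calc 1 - δ ≤ ∑ i, (μXY ((A i) ×ˢ (B i))).toReal := h1
    _ ≤ ∑ i, (μX (A i)).toReal ^ (1 - 1 / p) * (μY (B i)).toReal ^ (1 / q) :=
      sum_le_sum fun i _ ↦ hrect _ _ (hA i) (hB i)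
    _ ≤ (∑ i, (μX (A i)).toReal * (μY (B i)).toReal) ^ (1 / q) *
          (∑ i, (μX (A i)).toReal) ^ (1 - 1 / p - 1 / q) * (#univ : ℝ) ^ (1 / p) :=
      Real.sum_rpow_mul_rpow_le _ (fun _ ↦ ENNReal.toReal_nonneg) (fun _ ↦ ENNReal.toReal_nonneg)
        (by positivity) (by positivity) (by linarith [one_div_pos.mpr (zero_lt_one.trans hp)]) hpq
    _ ≤ ε ^ (1 / q) * (L : ℝ) ^ (1 / p) := by
      rw [hsum, Real.one_rpow, mul_one, card_univ, Fintype.card_fin]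
      gcongr

/-- Lower bound via hypercontractivity: if the joint distribution satisfies the
hypercontractive rectangle bound `P_{XY}(A×B) ≤ P_X(A)^{1/p'} P_Y(B)^{1/q}` with
`1 ≤ p' ≤ q ≤ p`, `p' = p/(p-1)`, and sets `A₁,…,A_L` partition `𝒳ⁿ`, `B₁,…,B_L ⊆ 𝒴ⁿ`
with `∑ᵢ P_{XY}(Aᵢ×Bᵢ) ≥ 1-δ` and `∑ᵢ P_X(Aᵢ)P_Y(Bᵢ) ≤ ε`, then `1-δ ≤ ε^{1/q}·L^{1/p}`. -/
theorem hypercontractivity_lower_bound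
    {𝒳 𝒴 : Type*} [MeasurableSpace 𝒳] [MeasurableSpace 𝒴]
    (μXY : Measure (𝒳 × 𝒴)) [IsProbabilityMeasure μXY]
    (μX : Measure 𝒳) [IsProbabilityMeasure μX]
    (μY : Measure 𝒴) [IsProbabilityMeasure μY]
    (p q : ℝ) (hp'1 : 1 ≤ p / (p - 1)) (hp'q : p / (p - 1) ≤ q) (hqp : q ≤ p)
    (hrect : ∀ (A : Set 𝒳) (B : Set 𝒴), MeasurableSet A → MeasurableSet B →
        (μXY (A ×ˢ B)).toReal ≤ (μX A).toReal ^ (1 - 1 / p) * (μY B).toReal ^ (1 / q))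
    (L : ℕ) (A : Fin L → Set 𝒳) (B : Fin L → Set 𝒴)
    (hA : ∀ i, MeasurableSet (A i)) (hB : ∀ i, MeasurableSet (B i))
    (hpart : ∀ x : 𝒳, ∃! i, x ∈ A i)
    (δ ε : ℝ)
    (h1 : 1 - δ ≤ ∑ i, (μXY ((A i) ×ˢ (B i))).toReal)
    (h2 : ∑ i, (μX (A i)).toReal * (μY (B i)).toReal ≤ ε) :
    1 - δ ≤ ε ^ (1 / q) * (L : ℝ) ^ (1 / p) :=
  hypercontractivity_lower_bound_general μXY μX μY p q hp'1 hp'q hrect L A B hA hB hpart δ ε h1 h2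
end

section
/- For ξ ∈ (0, 1-τ²] with τ ∈ (0,1), the function F(w) = (1+w)/(1+τ²w) − ξ(1+w) over w ≥ 0 attains its maximum at w* = (1/τ²)(√((1-τ²)/ξ) − 1), and the maximum value satisfies F(w*)·log(1/ε) = (1/τ²)·(√(log(1/ε)) − √((1-τ²)·log(1/(1-δ))))² when ξ = log(1-δ)/log(ε) (with δ,ε such that ξ ∈ (0, 1-τ²]). -/
/-!
Put `u = 1 + τ²w` and `s = √((1-τ²)/ξ)`, so that `ξ s² = 1 - τ²`. Then
`τ² F(w) = (1 - ξ s)² - ξ (u - s)² / u`, so `F` is maximal exactly where `u = s`, i.e. at `w*`,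
and `s ≥ 1` because `ξ ≤ 1 - τ²`. With `L = log(1/ε)` the definition of `ξ` reads
`ξ L = log(1/(1-δ))`, hence `√((1-τ²) log(1/(1-δ))) = ξ s √L` and
`τ² F(w*) L = (√L - ξ s √L)²`.
-/

open Real

lemma div_sub_mul_eq_sq_div_sub_sq_div {t ξ s w : ℝ} (ht : t ≠ 0) (hw : 1 + t * w ≠ 0)
    (hξs : ξ * s ^ 2 = 1 - t) :
    (1 + w) / (1 + t * w) - ξ * (1 + w)
      = (1 - ξ * s) ^ 2 / t - ξ * (1 + t * w - s) ^ 2 / (t * (1 + t * w)) := by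
  rw [div_sub' hw, div_sub_div _ _ ht (mul_ne_zero ht hw),
    div_eq_div_iff hw (mul_ne_zero ht (mul_ne_zero ht hw))]
  linear_combination t * (1 + t * w) * (1 - ξ * (1 + t * w)) * hξs

lemma one_sub_sq_mul_eq_sq_sqrt_sub {a L : ℝ} (ha : 0 ≤ a) (hL : 0 ≤ L) :
    (1 - a) ^ 2 * L = (√L - √(a ^ 2 * L)) ^ 2 := by
  rw [sqrt_mul (sq_nonneg a), sqrt_sq ha]
  linear_combination (1 - a) ^ 2 * (sq_sqrt hL).symm

lemma logb_div_logb_mul_logb_one_div {b x y : ℝ} (hy : logb b y ≠ 0) :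
    logb b x / logb b y * logb b (1 / y) = logb b (1 / x) := by
  simp only [one_div, logb_inv]
  field_simp

theorem hypercontractivity_optimization_general
    (τ δ ε : ℝ) (hτ : τ ∈ Set.Ioo (0:ℝ) 1)
    (hε : ε ∈ Set.Ioo (0:ℝ) 1)
    (ξ : ℝ) (hξdef : ξ = Real.logb 2 (1 - δ) / Real.logb 2 ε)
    (hξ : ξ ∈ Set.Ioc (0:ℝ) (1 - τ ^ 2))
    (F : ℝ → ℝ) (hF : ∀ w, F w = (1 + w) / (1 + τ ^ 2 * w) - ξ * (1 + w))
    (wstar : ℝ) (hw : wstar = (1 / τ ^ 2) * (Real.sqrt ((1 - τ ^ 2) / ξ) - 1)) :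
    0 ≤ wstar
    ∧ (∀ w, 0 ≤ w → F w ≤ F wstar)
    ∧ F wstar * Real.logb 2 (1 / ε)
        = (1 / τ ^ 2) * (Real.sqrt (Real.logb 2 (1 / ε))
            - Real.sqrt ((1 - τ ^ 2) * Real.logb 2 (1 / (1 - δ)))) ^ 2 := by
  obtain ⟨hτ0, -⟩ := hτ
  obtain ⟨hξ0, hξle⟩ := hξ
  have ht : 0 < τ ^ 2 := by positivity
  set s := √((1 - τ ^ 2) / ξ) with hs
  have hs1 : 1 ≤ s := one_le_sqrt.mpr ((one_le_div hξ0).mpr hξle)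
  have hξs : ξ * s ^ 2 = 1 - τ ^ 2 := by
    rw [hs, sq_sqrt (div_nonneg (by linarith) hξ0.le)]
    field_simp
  have hFw (w : ℝ) (hw : 0 ≤ w) := hF w ▸ div_sub_mul_eq_sq_div_sub_sq_div ht.ne'
    (by positivity : 1 + τ ^ 2 * w ≠ 0) hξs
  have hw0 : 0 ≤ wstar := by
    rw [hw]
    have : 0 ≤ s - 1 := by linarith
    positivity
  have hFstar : F wstar = (1 - ξ * s) ^ 2 / τ ^ 2 := by
    have hus : 1 + τ ^ 2 * wstar = s := by rw [hw]; field_simp; ring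
    rw [hFw wstar hw0, hus]
    simp
  refine ⟨hw0, fun w hw => ?_, ?_⟩
  · rw [hFstar, hFw w hw]
    exact sub_le_self _ (by positivity)
  · have hL : 0 ≤ logb 2 (1 / ε) :=
      logb_nonneg one_lt_two (one_le_one_div hε.1 hε.2.le)
    have hM : (1 - τ ^ 2) * logb 2 (1 / (1 - δ)) = (ξ * s) ^ 2 * logb 2 (1 / ε) := by
      have hlogε : logb 2 ε ≠ 0 := fun h => hξ0.ne' (by simp [hξdef, h])
      rw [← logb_div_logb_mul_logb_one_div hlogε, ← hξdef, ← hξs]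
      ring
    rw [hFstar, hM, ← one_sub_sq_mul_eq_sq_sqrt_sub (by positivity) hL]
    ring

/-- Optimization step for the hypercontractivity lower bound: for `ξ ∈ (0, 1-τ²]`,
`F(w) = (1+w)/(1+τ²w) − ξ(1+w)` is maximized over `w ≥ 0` at
`w* = (1/τ²)(√((1-τ²)/ξ) − 1)`, and with `ξ = log(1-δ)/log ε` the maximum satisfies
`F(w*)·log(1/ε) = (1/τ²)(√(log(1/ε)) − √((1-τ²)log(1/(1-δ))))²`. -/
theorem hypercontractivity_optimization
    (τ δ ε : ℝ) (hτ : τ ∈ Set.Ioo (0:ℝ) 1)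
    (hδ : δ ∈ Set.Ioo (0:ℝ) 1) (hε : ε ∈ Set.Ioo (0:ℝ) 1)
    (ξ : ℝ) (hξdef : ξ = Real.logb 2 (1 - δ) / Real.logb 2 ε)
    (hξ : ξ ∈ Set.Ioc (0:ℝ) (1 - τ ^ 2))
    (F : ℝ → ℝ) (hF : ∀ w, F w = (1 + w) / (1 + τ ^ 2 * w) - ξ * (1 + w))
    (wstar : ℝ) (hw : wstar = (1 / τ ^ 2) * (Real.sqrt ((1 - τ ^ 2) / ξ) - 1)) :
    0 ≤ wstar
    ∧ (∀ w, 0 ≤ w → F w ≤ F wstar)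
    ∧ F wstar * Real.logb 2 (1 / ε)
        = (1 / τ ^ 2) * (Real.sqrt (Real.logb 2 (1 / ε))
            - Real.sqrt ((1 - τ ^ 2) * Real.logb 2 (1 / (1 - δ)))) ^ 2 :=
  hypercontractivity_optimization_general τ δ ε hτ hε ξ hξdef hξ F hF wstar hw
end
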